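/- For partitions λ ⊢ a, μ ⊢ b and tableaux t_λ, t_μ, the (λ,μ)-polytabloid factors as an outer tensor of polytabloids: {t_{λ,μ}} · k_{t_{λ,μ}} = e_{t_λ} ⊗ e_{t_μ} inside M^λ ⊗_K M^μ, where k_{t_{λ,μ}} = Σ_{σ∈C_{t_λ},τ∈C_{t_μ}} sgn(σ)sgn(τ)(σ,τ). Consequently S^{λ,μ} ≅ S^λ ⊗_K S^μ. -/

import Mathlib

/-!
STATEMENT 13: For partitions `λ ⊢ a, μ ⊢ b` and tableaux `t_λ, t_μ`, the `(λ,μ)`-polytabloid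
factors as an outer tensor of polytabloids:
`{t_{λ,μ}} · k_{t_{λ,μ}} = e_{t_λ} ⊗ e_{t_μ}` inside `M^λ ⊗[K] M^μ` (computed in the big
permutation module), where `k_{t_{λ,μ}} = Σ sgn(σ)sgn(τ)(σ,τ)`.  Consequently the Specht
module `S^{λ,μ}` of `K[S_a × S_b]` (generated by all the `(λ,μ)`-polytabloids) is isomorphic
to `S^λ ⊗[K] S^μ`.
-/


open TensorProduct

set_option maxSynthPendingDepth 8
set_option synthInstance.maxHeartbeats 1000000
set_option maxHeartbeats 2000000

noncomputable section

/-- The outer tensor product of representations of `G` and `H`. -/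
def outerRep {K G H V W : Type} [Field K] [Monoid G] [Monoid H]
    [AddCommMonoid V] [Module K V] [AddCommMonoid W] [Module K W]
    (ρ : Representation K G V) (τ : Representation K H W) :
    Representation K (G × H) (V ⊗[K] W) :=
  Representation.tprod (ρ.comp (MonoidHom.fst G H)) (τ.comp (MonoidHom.snd G H))

/-- A partition of `a` (a Young diagram with `a` boxes), given by its antitone sequence of
row lengths. -/
structure Shape (a : ℕ) where
  part : ℕ → ℕ
  antitone : ∀ i j, i ≤ j → part j ≤ part i
  sum_eq : ∑ i ∈ Finset.range a, part i = a
  eventually_zero : ∀ i, a ≤ i → part i = 0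

/-- The dominance order on partitions of `a`. -/
def Dominates {a : ℕ} (lam mu : Shape a) : Prop :=
  ∀ n, ∑ i ∈ Finset.range n, mu.part i ≤ ∑ i ∈ Finset.range n, lam.part i

/-- The cells `(i, j)` (row `i`, column `j`) of the Young diagram of shape `lam`. -/
abbrev Shape.cells {a : ℕ} (lam : Shape a) : Type := {p : ℕ × ℕ // p.2 < lam.part p.1}

/-- A `λ`-tableau: a bijective filling of the Young diagram of shape `λ` by `{1, …, a}`. -/
abbrev Shape.Tableau {a : ℕ} (lam : Shape a) : Type := Fin a ≃ lam.cells

/-- The row in which an entry lies. -/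
def rowFn {a : ℕ} {lam : Shape a} (t : lam.Tableau) : Fin a → ℕ := fun x => (t x).1.1

/-- The column in which an entry lies. -/
def colFn {a : ℕ} {lam : Shape a} (t : lam.Tableau) : Fin a → ℕ := fun x => (t x).1.2

/-- The action of `S_a` on functions `Fin a → ℕ` by permuting the domain. -/
instance permAction (a : ℕ) : MulAction (Equiv.Perm (Fin a)) (Fin a → ℕ) where
  smul σ f := f ∘ σ.symm
  one_smul _f := rfl
  mul_smul _σ _τ _f := rfl

variable (K : Type) [Field K]

/-- The permutation representation of `S_a` on the free `K`-module on all functions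
`Fin a → ℕ`; the tabloids of shape `λ` (encoded by their row functions) span an invariant
subspace, the Young permutation module `M^λ`. -/
def bigRep (a : ℕ) : Representation K (Equiv.Perm (Fin a)) ((Fin a → ℕ) →₀ K) :=
  { toFun := fun g => Finsupp.lmapDomain K K (g • ·)
    map_one' := by ext x y; simp
    map_mul' := fun x y => by ext z w; simp [Finsupp.lmapDomain, Finsupp.mapDomain_comp, Function.comp_def, mul_smul] }

/-- The tabloid `{t}` of a tableau `t`, as a basis vector of the big permutation module. -/
def tabloid {a : ℕ} {lam : Shape a} (t : lam.Tableau) : (Fin a → ℕ) →₀ K :=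
  Finsupp.single (rowFn t) 1

open Classical in
/-- The polytabloid `e_t = Σ_{σ ∈ C_t} sgn(σ) {t·σ}` of a tableau `t`. -/
def polytabloid {a : ℕ} {lam : Shape a} (t : lam.Tableau) : (Fin a → ℕ) →₀ K :=
  ∑ σ : Equiv.Perm (Fin a),
    if (∀ x, colFn t (σ x) = colFn t x) then
      ((Equiv.Perm.sign σ : ℤ) : K) • Finsupp.single (fun x => rowFn t (σ x)) 1
    else 0

/-- The Young permutation module `M^λ` of `K[S_a]`: the (invariant) span of the tabloids of
shape `λ`, as a module over the group algebra. -/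
def permSubmodule {a : ℕ} (lam : Shape a) :
    Submodule (MonoidAlgebra K (Equiv.Perm (Fin a))) (bigRep K a).asModule :=
  Submodule.span _
    {v | ∃ t : lam.Tableau, v = ((bigRep K a).asModuleEquiv.symm (tabloid K t))}

/-- The Specht module `S^λ` of `K[S_a]`: the span of the polytabloids, as a module over the
group algebra. -/
def spechtSubmodule {a : ℕ} (lam : Shape a) :
    Submodule (MonoidAlgebra K (Equiv.Perm (Fin a))) (bigRep K a).asModule :=
  Submodule.span _
    {v | ∃ t : lam.Tableau, v = ((bigRep K a).asModuleEquiv.symm (polytabloid K t))}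

/-- The Specht module `S^λ`, as a representation of `S_a`. -/
def spechtRep {a : ℕ} (lam : Shape a) :
    Representation K (Equiv.Perm (Fin a))
      (RestrictScalars K (MonoidAlgebra K (Equiv.Perm (Fin a))) (spechtSubmodule K lam)) :=
  Representation.ofModule _

/-- The Young permutation module `M^λ`, as a representation of `S_a`. -/
def permRep {a : ℕ} (lam : Shape a) :
    Representation K (Equiv.Perm (Fin a))
      (RestrictScalars K (MonoidAlgebra K (Equiv.Perm (Fin a))) (permSubmodule K lam)) :=
  Representation.ofModule _

/-- The outer tensor product `S^λ ⊗[K] S^μ` (`Specht module of `K[S_a × S_b]`), as a module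
over `K[S_a × S_b]`. -/
abbrev outerSpechtModule {a b : ℕ} (lam : Shape a) (mu : Shape b) :=
  (outerRep (spechtRep K lam) (spechtRep K mu)).asModule

/-- The outer tensor product `M^λ ⊗[K] M^μ` (Young permutation module of `K[S_a × S_b]`),
as a module over `K[S_a × S_b]`. -/
abbrev outerPermModule {a b : ℕ} (lam : Shape a) (mu : Shape b) :=
  (outerRep (permRep K lam) (permRep K mu)).asModule

/-- The outer tensor product `S_λ ⊗[K] S_μ` of dual Specht modules, as a module over
`K[S_a × S_b]`. -/
abbrev outerDualSpechtModule {a b : ℕ} (lam : Shape a) (mu : Shape b) :=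
  (outerRep (spechtRep K lam).dual (spechtRep K mu).dual).asModule

open Classical in
/-- The signed column sum `k_{t_{λ,μ}} = Σ_{σ ∈ C_{t_λ}, τ ∈ C_{t_μ}} sgn(σ)sgn(τ)·(σ,τ)`
of a pair of tableaux, as an element of the group algebra `K[S_a × S_b]`. -/
def colSum {a b : ℕ} {lam : Shape a} {mu : Shape b}
    (t : lam.Tableau) (t' : mu.Tableau) :
    MonoidAlgebra K (Equiv.Perm (Fin a) × Equiv.Perm (Fin b)) :=
  ∑ p : Equiv.Perm (Fin a) × Equiv.Perm (Fin b),
    if (∀ x, colFn t (p.1 x) = colFn t x) ∧ (∀ y, colFn t' (p.2 y) = colFn t' y) then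
      (((Equiv.Perm.sign p.1 * Equiv.Perm.sign p.2 : ℤˣ) : ℤ) : K) • MonoidAlgebra.single p 1
    else 0

/-- The Specht module `S^{λ,μ}` of `K[S_a × S_b]`: the submodule generated by all
`(λ,μ)`-polytabloids `{t_{λ,μ}} · k_{t_{λ,μ}}`. -/
def spechtProdSubmodule {a b : ℕ} (lam : Shape a) (mu : Shape b) :
    Submodule (MonoidAlgebra K (Equiv.Perm (Fin a) × Equiv.Perm (Fin b)))
      (outerRep (bigRep K a) (bigRep K b)).asModule :=
  Submodule.span _
    {w | ∃ (t : lam.Tableau) (t' : mu.Tableau),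
      w = colSum K t t' •
        ((outerRep (bigRep K a) (bigRep K b)).asModuleEquiv.symm
          (tabloid K t ⊗ₜ[K] tabloid K t'))}

lemma colFn_inv_iff {a : ℕ} {lam : Shape a} (t : lam.Tableau) (σ : Equiv.Perm (Fin a)) :
    (∀ x, colFn t (σ⁻¹ x) = colFn t x) ↔ (∀ x, colFn t (σ x) = colFn t x) := by
  constructor
  · intro h x
    have := h (σ x)
    simpa using this.symm
  · intro h x
    have := h (σ⁻¹ x)
    simpa using this.symm

lemma bigRep_single {a : ℕ} (K : Type) [Field K] (σ : Equiv.Perm (Fin a)) (f : Fin a → ℕ) (r : K) :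
    bigRep K a σ (Finsupp.single f r) = Finsupp.single (f ∘ σ.symm) r := by
  have := Representation.ofMulAction_single (k := K) (G := Equiv.Perm (Fin a)) (H := Fin a → ℕ) σ f r
  show Finsupp.mapDomain (σ • ·) (Finsupp.single f r) = _
  rw [Finsupp.mapDomain_single]
  rfl

open Classical in
lemma part1 {a b : ℕ} (K : Type) [Field K] {lam : Shape a} {mu : Shape b}
    (t : lam.Tableau) (t' : mu.Tableau) :
    colSum K t t' •
          ((outerRep (bigRep K a) (bigRep K b)).asModuleEquiv.symm
            (tabloid K t ⊗ₜ[K] tabloid K t'))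
        = (outerRep (bigRep K a) (bigRep K b)).asModuleEquiv.symm
            (polytabloid K t ⊗ₜ[K] polytabloid K t') := by
  set ρ := outerRep (bigRep K a) (bigRep K b) with hρ
  have key : ρ.asAlgebraHom (colSum K t t') (tabloid K t ⊗ₜ[K] tabloid K t')
      = polytabloid K t ⊗ₜ[K] polytabloid K t' := by
    rw [colSum, map_sum]
    rw [polytabloid, polytabloid, TensorProduct.sum_tmul]
    simp only [TensorProduct.tmul_sum]
    rw [← Finset.sum_product', Finset.univ_product_univ, LinearMap.coe_sum, Finset.sum_apply]
    apply Fintype.sum_equiv ((Equiv.inv _).prodCongr (Equiv.inv _))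
    rintro ⟨σ, τ⟩
    simp only [Equiv.prodCongr_apply, Equiv.inv_apply, Prod.map]
    by_cases h1 : (∀ x, colFn t (σ x) = colFn t x)
    · by_cases h2 : (∀ y, colFn t' (τ y) = colFn t' y)
      · rw [if_pos ⟨h1, h2⟩, if_pos ((colFn_inv_iff t σ).mpr h1),
          if_pos ((colFn_inv_iff t' τ).mpr h2)]
        rw [MonoidAlgebra.smul_single', mul_one, Representation.asAlgebraHom_single, LinearMap.smul_apply]
        have hact : ρ (σ, τ) (tabloid K t ⊗ₜ[K] tabloid K t')
            = bigRep K a σ (tabloid K t) ⊗ₜ[K] bigRep K b τ (tabloid K t') := by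
          rw [hρ, outerRep, Representation.tprod_apply, TensorProduct.map_tmul]
          rfl
        rw [hact, tabloid, tabloid, bigRep_single, bigRep_single]
        rw [TensorProduct.tmul_smul, ← TensorProduct.smul_tmul', smul_smul]
        have hfa : (rowFn t ∘ σ.symm) = (fun x => rowFn t (σ⁻¹ x)) := rfl
        have hfb : (rowFn t' ∘ τ.symm) = (fun y => rowFn t' (τ⁻¹ y)) := rfl
        rw [hfa, hfb]
        congr 1
        push_cast
        rw [Equiv.Perm.sign_inv, Equiv.Perm.sign_inv]
        ring
      · rw [if_neg (by tauto), if_neg ((not_iff_not.mpr (colFn_inv_iff t' τ)).mpr h2)]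
        simp
    · rw [if_neg (by tauto), if_neg ((not_iff_not.mpr (colFn_inv_iff t σ)).mpr h1)]
      simp
  calc colSum K t t' • (ρ.asModuleEquiv.symm (tabloid K t ⊗ₜ[K] tabloid K t'))
      = ρ.asModuleEquiv.symm (ρ.asAlgebraHom (colSum K t t') (tabloid K t ⊗ₜ[K] tabloid K t')) := by
        apply ρ.asModuleEquiv.injective
        rw [Representation.asModuleEquiv_map_smul]
        simp
    _ = _ := by rw [key]
section part2

variable (K : Type) [Field K]

/-- The `K`-linear inclusion of the Specht module into the big permutation module. -/
def inclS {a : ℕ} (lam : Shape a) :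
    (RestrictScalars K (MonoidAlgebra K (Equiv.Perm (Fin a))) (spechtSubmodule K lam))
      →ₗ[K] ((Fin a → ℕ) →₀ K) where
  toFun v := (bigRep K a).asModuleEquiv
    ((RestrictScalars.addEquiv K _ _ v : spechtSubmodule K lam) : (bigRep K a).asModule)
  map_add' v w := by simp
  map_smul' c v := by
    rw [RestrictScalars.addEquiv_map_smul]
    push_cast [Submodule.coe_smul]
    rw [Representation.asModuleEquiv_map_smul]
    simp

lemma inclS_injective {a : ℕ} (lam : Shape a) : Function.Injective (inclS K lam) := by
  intro v w h
  apply (RestrictScalars.addEquiv K _ _).injective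
  apply Subtype.ext
  apply (bigRep K a).asModuleEquiv.injective
  exact h

lemma inclS_comm {a : ℕ} (lam : Shape a) (g : Equiv.Perm (Fin a))
    (v : RestrictScalars K (MonoidAlgebra K (Equiv.Perm (Fin a))) (spechtSubmodule K lam)) :
    inclS K lam (spechtRep K lam g v) = bigRep K a g (inclS K lam v) := by
  have h1 : spechtRep K lam g v
      = (Representation.ofModule (spechtSubmodule K lam : Submodule _ _)).asAlgebraHom
          (MonoidAlgebra.single g 1) v := by
    rw [Representation.asAlgebraHom_single_one]; rfl
  rw [inclS]
  dsimp only [LinearMap.coe_mk, AddHom.coe_mk]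
  rw [h1, Representation.ofModule_asAlgebraHom_apply_apply, AddEquiv.apply_symm_apply]
  rw [Submodule.coe_smul]
  rw [Representation.asModuleEquiv_map_smul, Representation.asAlgebraHom_single_one]

end part2

section part3
variable (K : Type) [Field K] {a b : ℕ} (lam : Shape a) (mu : Shape b)

lemma map_inclS_comm (p : Equiv.Perm (Fin a) × Equiv.Perm (Fin b))
    (z : (RestrictScalars K (MonoidAlgebra K (Equiv.Perm (Fin a))) (spechtSubmodule K lam))
          ⊗[K] (RestrictScalars K (MonoidAlgebra K (Equiv.Perm (Fin b))) (spechtSubmodule K mu))) :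
    TensorProduct.map (inclS K lam) (inclS K mu) (outerRep (spechtRep K lam) (spechtRep K mu) p z)
      = outerRep (bigRep K a) (bigRep K b) p
          (TensorProduct.map (inclS K lam) (inclS K mu) z) := by
  induction z using TensorProduct.induction_on with
  | zero => simp
  | tmul v w =>
      rw [outerRep, outerRep, Representation.tprod_apply, Representation.tprod_apply,
        TensorProduct.map_tmul, TensorProduct.map_tmul, TensorProduct.map_tmul]
      exact congrArg₂ (· ⊗ₜ[K] ·) (inclS_comm K lam p.1 v) (inclS_comm K mu p.2 w)
  | add x y hx hy => simp [map_add, hx, hy]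

lemma map_inclS_algebraHom (r : MonoidAlgebra K (Equiv.Perm (Fin a) × Equiv.Perm (Fin b)))
    (z : (RestrictScalars K (MonoidAlgebra K (Equiv.Perm (Fin a))) (spechtSubmodule K lam))
          ⊗[K] (RestrictScalars K (MonoidAlgebra K (Equiv.Perm (Fin b))) (spechtSubmodule K mu))) :
    TensorProduct.map (inclS K lam) (inclS K mu)
        ((outerRep (spechtRep K lam) (spechtRep K mu)).asAlgebraHom r z)
      = (outerRep (bigRep K a) (bigRep K b)).asAlgebraHom r
          (TensorProduct.map (inclS K lam) (inclS K mu) z) := by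
  induction r using MonoidAlgebra.induction_linear with
  | zero => simp
  | add f g hf hg => simp [map_add, LinearMap.add_apply, hf, hg]
  | single p c =>
      rw [Representation.asAlgebraHom_single, Representation.asAlgebraHom_single,
        LinearMap.smul_apply, LinearMap.smul_apply, map_smul, map_inclS_comm]

/-- The `K[S_a × S_b]`-linear inclusion of the outer Specht module into the big module. -/
def Phi : outerSpechtModule K lam mu
    →ₗ[MonoidAlgebra K (Equiv.Perm (Fin a) × Equiv.Perm (Fin b))]
      (outerRep (bigRep K a) (bigRep K b)).asModule where
  toFun z := (outerRep (bigRep K a) (bigRep K b)).asModuleEquiv.symm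
    (TensorProduct.map (inclS K lam) (inclS K mu)
      ((outerRep (spechtRep K lam) (spechtRep K mu)).asModuleEquiv z))
  map_add' x y := by
    rw [map_add, map_add]
    exact LinearEquiv.map_add _ _ _
  map_smul' r z := by
    dsimp only [RingHom.id_apply]
    have h1 : (outerRep (spechtRep K lam) (spechtRep K mu)).asModuleEquiv (r • z)
        = (outerRep (spechtRep K lam) (spechtRep K mu)).asAlgebraHom r
            ((outerRep (spechtRep K lam) (spechtRep K mu)).asModuleEquiv z) :=
      Representation.asModuleEquiv_map_smul _ _ _
    rw [h1, map_inclS_algebraHom]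
    apply (outerRep (bigRep K a) (bigRep K b)).asModuleEquiv.injective
    rw [LinearEquiv.apply_symm_apply, Representation.asModuleEquiv_map_smul,
      LinearEquiv.apply_symm_apply]

lemma Phi_injective : Function.Injective (Phi K lam mu) := by
  intro x y h
  apply (outerRep (spechtRep K lam) (spechtRep K mu)).asModuleEquiv.injective
  have hmap : Function.Injective (TensorProduct.map (inclS K lam) (inclS K mu)) := by
    haveI : ∀ {n : ℕ} (ν : Shape n), Module.Flat K
        (RestrictScalars K (MonoidAlgebra K (Equiv.Perm (Fin n))) (spechtSubmodule K ν)) :=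
      fun ν => Module.Flat.of_linearEquiv (LinearEquiv.ofInjective (inclS K ν) (inclS_injective K ν))
    rw [← LinearMap.lTensor_comp_rTensor, LinearMap.coe_comp]
    exact Function.Injective.comp
      (Module.Flat.lTensor_preserves_injective_linearMap _ (inclS_injective K mu))
      (Module.Flat.rTensor_preserves_injective_linearMap _ (inclS_injective K lam))
  apply hmap
  apply (outerRep (bigRep K a) (bigRep K b)).asModuleEquiv.symm.injective
  exact h

end part3

section part4
variable (K : Type) [Field K] {a b : ℕ} (lam : Shape a) (mu : Shape b)

lemma E_add {G V : Type} [Monoid G] [AddCommMonoid V] [Module K V]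
    (ρ : Representation K G V) (x y : ρ.asModule) :
    ρ.asModuleEquiv (x + y) = ρ.asModuleEquiv x + ρ.asModuleEquiv y := rfl

lemma E_zero {G V : Type} [Monoid G] [AddCommMonoid V] [Module K V]
    (ρ : Representation K G V) : ρ.asModuleEquiv (0 : ρ.asModule) = 0 := rfl

lemma Es_add {G V : Type} [Monoid G] [AddCommMonoid V] [Module K V]
    (ρ : Representation K G V) (x y : V) :
    ρ.asModuleEquiv.symm (x + y) = ρ.asModuleEquiv.symm x + ρ.asModuleEquiv.symm y := rfl

lemma Es_zero {G V : Type} [Monoid G] [AddCommMonoid V] [Module K V]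
    (ρ : Representation K G V) : ρ.asModuleEquiv.symm (0 : V) = 0 := rfl

lemma smulK_mem {G V : Type} [Monoid G] [AddCommMonoid V] [Module K V]
    (ρ : Representation K G V) (P : Submodule (MonoidAlgebra K G) ρ.asModule)
    (c : K) {z : V} (hz : ρ.asModuleEquiv.symm z ∈ P) :
    ρ.asModuleEquiv.symm (c • z) ∈ P := by
  have h : ρ.asModuleEquiv.symm (c • z)
      = (algebraMap K (MonoidAlgebra K G) c) • ρ.asModuleEquiv.symm z :=
    Representation.asModuleEquiv_symm_map_smul ρ c z
  rw [h]
  exact Submodule.smul_mem _ _ hz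

lemma act_mem {G V : Type} [Monoid G] [AddCommMonoid V] [Module K V]
    (ρ : Representation K G V) (P : Submodule (MonoidAlgebra K G) ρ.asModule)
    (p : G) {z : V} (hz : ρ.asModuleEquiv.symm z ∈ P) :
    ρ.asModuleEquiv.symm (ρ p z) ∈ P := by
  rw [Representation.asModuleEquiv_symm_map_rho]
  exact Submodule.smul_mem _ _ hz

lemma left_act (r : MonoidAlgebra K (Equiv.Perm (Fin a))) (u : (Fin a → ℕ) →₀ K)
    (y : (Fin b → ℕ) →₀ K)
    (h : (outerRep (bigRep K a) (bigRep K b)).asModuleEquiv.symm (u ⊗ₜ[K] y)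
          ∈ spechtProdSubmodule K lam mu) :
    (outerRep (bigRep K a) (bigRep K b)).asModuleEquiv.symm
        ((bigRep K a).asAlgebraHom r u ⊗ₜ[K] y) ∈ spechtProdSubmodule K lam mu := by
  induction r using MonoidAlgebra.induction_linear with
  | zero =>
      rw [map_zero, LinearMap.zero_apply, TensorProduct.zero_tmul, Es_zero]
      exact Submodule.zero_mem _
  | add f g hf hg =>
      rw [map_add, LinearMap.add_apply, TensorProduct.add_tmul, Es_add]
      exact Submodule.add_mem _ hf hg
  | single p c =>
      rw [Representation.asAlgebraHom_single, LinearMap.smul_apply,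
        ← TensorProduct.smul_tmul']
      apply smulK_mem
      have hrho : bigRep K a p u ⊗ₜ[K] y
          = outerRep (bigRep K a) (bigRep K b) (p, 1) (u ⊗ₜ[K] y) := by
        rw [outerRep, Representation.tprod_apply, TensorProduct.map_tmul]
        show _ = bigRep K a p u ⊗ₜ[K] (bigRep K b 1) y
        rw [map_one, Module.End.one_apply]
      rw [hrho]
      exact act_mem K _ _ _ h

lemma right_act (r : MonoidAlgebra K (Equiv.Perm (Fin b))) (u : (Fin a → ℕ) →₀ K)
    (y : (Fin b → ℕ) →₀ K)
    (h : (outerRep (bigRep K a) (bigRep K b)).asModuleEquiv.symm (u ⊗ₜ[K] y)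
          ∈ spechtProdSubmodule K lam mu) :
    (outerRep (bigRep K a) (bigRep K b)).asModuleEquiv.symm
        (u ⊗ₜ[K] (bigRep K b).asAlgebraHom r y) ∈ spechtProdSubmodule K lam mu := by
  induction r using MonoidAlgebra.induction_linear with
  | zero =>
      rw [map_zero, LinearMap.zero_apply, TensorProduct.tmul_zero, Es_zero]
      exact Submodule.zero_mem _
  | add f g hf hg =>
      rw [map_add, LinearMap.add_apply, TensorProduct.tmul_add, Es_add]
      exact Submodule.add_mem _ hf hg
  | single p c =>
      rw [Representation.asAlgebraHom_single, LinearMap.smul_apply,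
        TensorProduct.tmul_smul]
      apply smulK_mem
      have hrho : u ⊗ₜ[K] bigRep K b p y
          = outerRep (bigRep K a) (bigRep K b) (1, p) (u ⊗ₜ[K] y) := by
        rw [outerRep, Representation.tprod_apply, TensorProduct.map_tmul]
        show _ = (bigRep K a 1) u ⊗ₜ[K] bigRep K b p y
        rw [map_one, Module.End.one_apply]
      rw [hrho]
      exact act_mem K _ _ _ h

lemma claim_mem {u : (bigRep K a).asModule} (hu : u ∈ spechtSubmodule K lam)
    {w : (bigRep K b).asModule} (hw : w ∈ spechtSubmodule K mu) :
    (outerRep (bigRep K a) (bigRep K b)).asModuleEquiv.symm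
        ((bigRep K a).asModuleEquiv u ⊗ₜ[K] (bigRep K b).asModuleEquiv w)
      ∈ spechtProdSubmodule K lam mu := by
  induction hu using Submodule.span_induction with
  | mem x hx =>
      induction hw using Submodule.span_induction with
      | mem y hy =>
          obtain ⟨t, hxt⟩ := hx
          obtain ⟨t', hyt⟩ := hy
          rw [hxt, hyt, LinearEquiv.apply_symm_apply, LinearEquiv.apply_symm_apply]
          rw [← part1 K t t']
          exact Submodule.subset_span ⟨t, t', rfl⟩
      | zero =>
          rw [E_zero, TensorProduct.tmul_zero, Es_zero]
          exact Submodule.zero_mem _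
      | add y z _ _ hy hz =>
          rw [E_add, TensorProduct.tmul_add, Es_add]
          exact Submodule.add_mem _ hy hz
      | smul r y _ hy =>
          have : (bigRep K b).asModuleEquiv (r • y)
              = (bigRep K b).asAlgebraHom r ((bigRep K b).asModuleEquiv y) :=
            Representation.asModuleEquiv_map_smul _ _ _
          rw [this]
          exact right_act K lam mu r _ _ hy
  | zero =>
      rw [E_zero, TensorProduct.zero_tmul, Es_zero]
      exact Submodule.zero_mem _
  | add y z _ _ hy hz =>
      rw [E_add, TensorProduct.add_tmul, Es_add]
      exact Submodule.add_mem _ hy hz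
  | smul r y _ hy =>
      have : (bigRep K a).asModuleEquiv (r • y)
          = (bigRep K a).asAlgebraHom r ((bigRep K a).asModuleEquiv y) :=
        Representation.asModuleEquiv_map_smul _ _ _
      rw [this]
      exact left_act K lam mu r _ _ hy

lemma Phi_range : LinearMap.range (Phi K lam mu) = spechtProdSubmodule K lam mu := by
  apply le_antisymm
  · rintro _ ⟨z, rfl⟩
    rw [Phi]
    dsimp only [LinearMap.coe_mk, AddHom.coe_mk]
    generalize (outerRep (spechtRep K lam) (spechtRep K mu)).asModuleEquiv z = y
    induction y using TensorProduct.induction_on with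
    | zero =>
        rw [LinearMap.map_zero, Es_zero]
        exact Submodule.zero_mem _
    | tmul v w =>
        rw [TensorProduct.map_tmul]
        have hv : inclS K lam v
            = (bigRep K a).asModuleEquiv
                ((RestrictScalars.addEquiv K _ _ v : spechtSubmodule K lam) :
                  (bigRep K a).asModule) := rfl
        have hw : inclS K mu w
            = (bigRep K b).asModuleEquiv
                ((RestrictScalars.addEquiv K _ _ w : spechtSubmodule K mu) :
                  (bigRep K b).asModule) := rfl
        rw [hv, hw]
        exact claim_mem K lam mu (RestrictScalars.addEquiv K _ _ v).2
          (RestrictScalars.addEquiv K _ _ w).2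
    | add y z hy hz =>
        rw [LinearMap.map_add, Es_add]
        exact Submodule.add_mem _ hy hz
  · rw [spechtProdSubmodule]
    apply Submodule.span_le.mpr
    rintro w ⟨t, t', rfl⟩
    rw [part1 K t t']
    refine ⟨(RestrictScalars.addEquiv K _ _).symm
        ⟨(bigRep K a).asModuleEquiv.symm (polytabloid K t), Submodule.subset_span ⟨t, rfl⟩⟩
      ⊗ₜ[K] (RestrictScalars.addEquiv K _ _).symm
        ⟨(bigRep K b).asModuleEquiv.symm (polytabloid K t'), Submodule.subset_span ⟨t', rfl⟩⟩, ?_⟩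
    rw [Phi]
    dsimp only [LinearMap.coe_mk, AddHom.coe_mk]
    have hE : ((outerRep (spechtRep K lam) (spechtRep K mu)).asModuleEquiv
        ((RestrictScalars.addEquiv K _ _).symm
          ⟨(bigRep K a).asModuleEquiv.symm (polytabloid K t), Submodule.subset_span ⟨t, rfl⟩⟩
        ⊗ₜ[K] (RestrictScalars.addEquiv K _ _).symm
          ⟨(bigRep K b).asModuleEquiv.symm (polytabloid K t'), Submodule.subset_span ⟨t', rfl⟩⟩
          : outerSpechtModule K lam mu))
        = ((RestrictScalars.addEquiv K _ _).symm
          ⟨(bigRep K a).asModuleEquiv.symm (polytabloid K t), Submodule.subset_span ⟨t, rfl⟩⟩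
        ⊗ₜ[K] (RestrictScalars.addEquiv K _ _).symm
          ⟨(bigRep K b).asModuleEquiv.symm (polytabloid K t'), Submodule.subset_span ⟨t', rfl⟩⟩) :=
      rfl
    rw [hE, TensorProduct.map_tmul]
    have h1 : inclS K lam ((RestrictScalars.addEquiv K _ _).symm
        ⟨(bigRep K a).asModuleEquiv.symm (polytabloid K t), Submodule.subset_span ⟨t, rfl⟩⟩)
        = polytabloid K t := by
      rw [inclS]
      dsimp only [LinearMap.coe_mk, AddHom.coe_mk]
      rw [AddEquiv.apply_symm_apply]
      exact (bigRep K a).asModuleEquiv.apply_symm_apply _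
    have h2 : inclS K mu ((RestrictScalars.addEquiv K _ _).symm
        ⟨(bigRep K b).asModuleEquiv.symm (polytabloid K t'), Submodule.subset_span ⟨t', rfl⟩⟩)
        = polytabloid K t' := by
      rw [inclS]
      dsimp only [LinearMap.coe_mk, AddHom.coe_mk]
      rw [AddEquiv.apply_symm_apply]
      exact (bigRep K b).asModuleEquiv.apply_symm_apply _
    rw [h1, h2]

end part4

/-- The `(λ,μ)`-polytabloid `{t_{λ,μ}}·k_{t_{λ,μ}}` equals the outer
tensor `e_{t_λ} ⊗ e_{t_μ}` of the polytabloids; consequently the Specht module `S^{λ,μ}` of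
`K[S_a × S_b]` is isomorphic to `S^λ ⊗[K] S^μ`. -/
theorem polytabloid_outer_factorization {a b : ℕ} (lam : Shape a) (mu : Shape b) :
    (∀ (t : lam.Tableau) (t' : mu.Tableau),
      colSum K t t' •
          ((outerRep (bigRep K a) (bigRep K b)).asModuleEquiv.symm
            (tabloid K t ⊗ₜ[K] tabloid K t'))
        = (outerRep (bigRep K a) (bigRep K b)).asModuleEquiv.symm
            (polytabloid K t ⊗ₜ[K] polytabloid K t')) ∧
    Nonempty
      ((spechtProdSubmodule K lam mu)
        ≃ₗ[MonoidAlgebra K (Equiv.Perm (Fin a) × Equiv.Perm (Fin b))]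
       outerSpechtModule K lam mu) := by
  refine ⟨fun t t' => part1 K t t', ?_⟩
  exact ⟨(LinearEquiv.ofEq _ _ (Phi_range K lam mu).symm).trans
    (LinearEquiv.ofInjective (Phi K lam mu) (Phi_injective K lam mu)).symm⟩

end
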